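/- Let T be an n×n complex matrix, π ∈ ℂ^n with (I − T)π = 0, and e ∈ ℂ^n with e^*(I − T) = 0. Let t, u ∈ ℂ^n satisfy e^*t ≠ 0 and suppose M := I − T + t u^* is invertible. Let f, g ∈ ℂ^n be arbitrary and set G := M^{-1} + π f^* + g e^*. Then I − (I − T)G = h e^*, where h := t/(e^*t) − (I − T)g. In particular I − (I − T)G is a rank-at-most-one matrix whose rows are all proportional to e^*. -/

import Mathlib

open Matrix

lemma aux_mul_vecMulVec {n : ℕ} (A : Matrix (Fin n) (Fin n) ℂ) (w v : Fin n → ℂ) :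
    A * Matrix.vecMulVec w v = Matrix.vecMulVec (A.mulVec w) v := by
  ext i j
  simp [Matrix.mul_apply, Matrix.vecMulVec_apply, Matrix.mulVec, dotProduct,
    Finset.sum_mul, mul_assoc]

lemma aux_vecMulVec_mul {n : ℕ} (w v : Fin n → ℂ) (B : Matrix (Fin n) (Fin n) ℂ) :
    Matrix.vecMulVec w v * B = Matrix.vecMulVec w (Matrix.vecMul v B) := by
  ext i j
  simp [Matrix.mul_apply, Matrix.vecMulVec_apply, Matrix.vecMul, dotProduct,
    Finset.mul_sum, mul_assoc]

lemma aux_vecMulVec_smul_right {n : ℕ} (w v : Fin n → ℂ) (c : ℂ) :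
    Matrix.vecMulVec w (c • v) = c • Matrix.vecMulVec w v := by
  ext i j
  simp [Matrix.vecMulVec_apply]
  ring

/-- With `(I − T)π = 0`, `e^*(I − T) = 0`, `e^*t ≠ 0`, `M := I − T + t u^*`
invertible and `G := M⁻¹ + π f^* + g e^*`, one has `I − (I − T)G = h e^*` where
`h := t/(e^*t) − (I − T)g`. -/
theorem one_sub_mul_g_inverse_rank_one {n : ℕ} (T : Matrix (Fin n) (Fin n) ℂ)
    (π : Fin n → ℂ) (hπ : (1 - T).mulVec π = 0)
    (e : Fin n → ℂ) (he : Matrix.vecMul (star e) (1 - T) = 0)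
    (t u : Fin n → ℂ) (het : dotProduct (star e) t ≠ 0)
    (M : Matrix (Fin n) (Fin n) ℂ) (hMdef : M = 1 - T + Matrix.vecMulVec t (star u))
    (hM : IsUnit M)
    (f g : Fin n → ℂ)
    (G : Matrix (Fin n) (Fin n) ℂ)
    (hG : G = M⁻¹ + Matrix.vecMulVec π (star f) + Matrix.vecMulVec g (star e))
    (h : Fin n → ℂ)
    (hh : h = (dotProduct (star e) t)⁻¹ • t - (1 - T).mulVec g) :
    1 - (1 - T) * G = Matrix.vecMulVec h (star e) := by
  have hMinv : M * M⁻¹ = 1 := Matrix.mul_nonsing_inv M (Matrix.isUnit_iff_isUnit_det M |>.mp hM)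
  -- e^* M = (e^* t) • u^*
  have heM : Matrix.vecMul (star e) M = (dotProduct (star e) t) • (star u) := by
    rw [hMdef, Matrix.vecMul_add, he]
    ext j
    simp [Matrix.vecMul, dotProduct, Matrix.vecMulVec_apply, Finset.sum_mul, mul_assoc,
      Finset.mul_sum, mul_comm]
    exact Finset.sum_congr rfl fun _ _ => by ring
  -- u^* M⁻¹ = (e^*t)⁻¹ • e^*
  have huMinv : Matrix.vecMul (star u) M⁻¹
      = (dotProduct (star e) t)⁻¹ • (star e) := by
    have h1 : Matrix.vecMul (Matrix.vecMul (star e) M) M⁻¹ = star e := by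
      rw [Matrix.vecMul_vecMul, hMinv, Matrix.vecMul_one]
    rw [heM, Matrix.smul_vecMul] at h1
    rw [eq_inv_smul_iff₀ het]
    exact h1
  -- (1 - T) * M⁻¹
  have hTMinv : (1 - T) * M⁻¹
      = 1 - (dotProduct (star e) t)⁻¹ • Matrix.vecMulVec t (star e) := by
    have : (1 - T) = M - Matrix.vecMulVec t (star u) := by rw [hMdef, add_sub_cancel_right]
    rw [this, Matrix.sub_mul, hMinv, aux_vecMulVec_mul, huMinv, aux_vecMulVec_smul_right]
  have hπ' : (1 - T) * Matrix.vecMulVec π (star f) = 0 := by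
    rw [aux_mul_vecMulVec, hπ]
    ext i j
    simp [Matrix.vecMulVec_apply]
  rw [hG, Matrix.mul_add, Matrix.mul_add, hπ', hTMinv, aux_mul_vecMulVec, hh]
  ext i j
  simp [Matrix.vecMulVec_apply, Matrix.sub_apply, Matrix.smul_apply, Matrix.one_apply]
  ring
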